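/- Let Q be a medial quandle. Then the following are equivalent: (1) Q is m-reductive for some m; (2) at least one orbit of Q, as a subquandle, is m-reductive for some m; (3) every orbit of Q, as a subquandle, is m-reductive for some m. Moreover: (a) for every m ≥ 1, Q is m-reductive if and only if every orbit of Q is (m−1)-reductive; and (b) if some orbit of Q is m-reductive, then Q is (m+3)-reductive. -/

import Mathlib

/-- The set of left translations of a binary algebra `(Q, op)`, viewed as permutations:
permutations `f` such that `f x = op a x` for some `a`. -/
def translations {Q : Type*} (op : Q → Q → Q) : Set (Equiv.Perm Q) :=
  { f | ∃ a : Q, ∀ x : Q, f x = op a x }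

/-- The (left) multiplication group `LMlt(Q)`: the subgroup of the symmetric group
generated by the left translations. -/
def LMlt {Q : Type*} (op : Q → Q → Q) : Subgroup (Equiv.Perm Q) :=
  Subgroup.closure (translations op)

/-- The displacement group `Dis(Q)`: the subgroup generated by all `L_a * L_b⁻¹`. -/
def Dis {Q : Type*} (op : Q → Q → Q) : Subgroup (Equiv.Perm Q) :=
  Subgroup.closure { f | ∃ g ∈ translations op, ∃ h ∈ translations op, f = g * h⁻¹ }

/-- `(Q, op)` is a quandle: idempotent, left distributive, left quasigroup. -/
def IsQuandle {Q : Type*} (op : Q → Q → Q) : Prop :=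
  (∀ x, op x x = x) ∧
  (∀ x y z, op x (op y z) = op (op x y) (op x z)) ∧
  (∀ x y, ∃! u, op x u = y)

/-- `(Q, op)` is medial. -/
def IsMedial {Q : Type*} (op : Q → Q → Q) : Prop :=
  ∀ x y u v, op (op x y) (op u v) = op (op x u) (op y v)

/-- The orbit of `e` under the multiplication group. -/
def qOrbit {Q : Type*} (op : Q → Q → Q) (e : Q) : Set Q :=
  { y | ∃ f ∈ LMlt op, f e = y }

/-- The orbit of `e` under the displacement group. -/
def disOrbit {Q : Type*} (op : Q → Q → Q) (e : Q) : Set Q :=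
  { y | ∃ f ∈ Dis op, f e = y }

/-!
In a medial quandle the displacement group `Dis(Q)` is abelian, and for `d ∈ Dis(Q)` the
commutator `ψ d = ⁅d, L_e⁆` does not depend on `e`; on `Dis(Q)` it is an endomorphism (`1 - φ`
in additive notation, `φ` being conjugation by `L_e`). Since `⁅d, L_y⁆ y = (d y) · y`, right
multiplication by `y` acts on the orbit `Dis(Q) y` as `ψ` does, so both `k`-reductivity of the
orbits and `(k + 1)`-reductivity of `Q` (write `x · y = (L_x L_y⁻¹) y`) say that every `ψ^k d`
fixes every point. If one orbit `Dis(Q) e` is `m`-reductive, then `ψ^m d` fixes `e`, and a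
displacement `f` fixing `e` has `⁅f, L_e⁆ = L_{f e} L_e⁻¹ = 1`; so `ψ^(m + 1) = 1` and `Q` is
`(m + 2)`-reductive.
-/

def IsReductive {Q : Type*} (op : Q → Q → Q) (m : ℕ) : Prop :=
  ∀ x y : Q, (fun z => op z y)^[m] x = y

def IsReductiveOn {Q : Type*} (op : Q → Q → Q) (m : ℕ) (S : Set Q) : Prop :=
  ∀ x ∈ S, ∀ y ∈ S, (fun z => op z y)^[m] x = y

open scoped commutatorElement

theorem dis_le_lMlt {Q : Type*} (op : Q → Q → Q) : Dis op ≤ LMlt op := by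
  rw [Dis, Subgroup.closure_le]
  rintro _ ⟨g, hg, h, hh, rfl⟩
  exact mul_mem (Subgroup.subset_closure hg) (inv_mem (Subgroup.subset_closure hh))

theorem mem_qOrbit_self {Q : Type*} (op : Q → Q → Q) (e : Q) : e ∈ qOrbit op e :=
  ⟨1, one_mem _, rfl⟩

namespace IsQuandle

variable {Q : Type*} {op : Q → Q → Q} (hQ : IsQuandle op)
include hQ

noncomputable def leftPerm (a : Q) : Equiv.Perm Q :=
  Equiv.ofBijective (op a)
    ⟨fun _ v huv => (hQ.2.2 a (op a v)).unique huv rfl, fun y => (hQ.2.2 a y).exists⟩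

@[simp]
theorem leftPerm_apply (a x : Q) : hQ.leftPerm a x = op a x := rfl

theorem translations_eq_range : translations op = Set.range hQ.leftPerm := by
  ext f
  exact ⟨fun ⟨a, ha⟩ => ⟨a, Equiv.ext fun x => (ha x).symm⟩, fun ⟨a, ha⟩ => ⟨a, fun _ => ha ▸ rfl⟩⟩

theorem leftPerm_mem_lMlt (a : Q) : hQ.leftPerm a ∈ LMlt op :=
  Subgroup.subset_closure ⟨a, fun _ => rfl⟩

theorem leftPerm_mul_inv_mem_dis (a b : Q) : hQ.leftPerm a * (hQ.leftPerm b)⁻¹ ∈ Dis op :=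
  Subgroup.subset_closure ⟨_, ⟨a, fun _ => rfl⟩, _, ⟨b, fun _ => rfl⟩, rfl⟩

theorem leftPerm_inv_apply_self (a : Q) : (hQ.leftPerm a)⁻¹ a = a := by
  rw [Equiv.Perm.inv_eq_iff_eq, leftPerm_apply, hQ.1]

theorem map_op_of_mem_lMlt {f : Equiv.Perm Q} (hf : f ∈ LMlt op) (x y : Q) :
    f (op x y) = op (f x) (f y) := by
  induction hf using Subgroup.closure_induction generalizing x y with
  | mem f hf =>
    obtain ⟨a, ha⟩ := hf
    simp only [ha]
    exact hQ.2.1 a x y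
  | one => rfl
  | mul f g _ _ hf hg => simp only [Equiv.Perm.mul_apply, hg, hf]
  | inv f _ hf =>
    rw [Equiv.Perm.inv_eq_iff_eq, hf]
    simp

theorem leftPerm_apply_of_mem_lMlt {f : Equiv.Perm Q} (hf : f ∈ LMlt op) (x : Q) :
    hQ.leftPerm (f x) = f * hQ.leftPerm x * f⁻¹ := by
  ext z
  simp [hQ.map_op_of_mem_lMlt hf]

theorem commutatorElement_leftPerm_eq {f : Equiv.Perm Q} (hf : f ∈ LMlt op) (e : Q) :
    ⁅f, hQ.leftPerm e⁆ = hQ.leftPerm (f e) * (hQ.leftPerm e)⁻¹ := by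
  rw [commutatorElement_def, hQ.leftPerm_apply_of_mem_lMlt hf]

theorem commutatorElement_leftPerm_mem_dis {f : Equiv.Perm Q} (hf : f ∈ LMlt op) (e : Q) :
    ⁅f, hQ.leftPerm e⁆ ∈ Dis op := by
  rw [hQ.commutatorElement_leftPerm_eq hf]
  exact hQ.leftPerm_mul_inv_mem_dis _ _

theorem commutatorElement_leftPerm_apply_self {f : Equiv.Perm Q} (hf : f ∈ LMlt op) (e : Q) :
    ⁅f, hQ.leftPerm e⁆ e = op (f e) e := by
  rw [hQ.commutatorElement_leftPerm_eq hf, Equiv.Perm.mul_apply, leftPerm_inv_apply_self,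
    leftPerm_apply]

theorem commutatorElement_leftPerm_eq_one {f : Equiv.Perm Q} (hf : f ∈ LMlt op) {e : Q}
    (he : f e = e) : ⁅f, hQ.leftPerm e⁆ = 1 := by
  rw [hQ.commutatorElement_leftPerm_eq hf, he, mul_inv_cancel]

theorem leftPerm_conj_mem_dis {d : Equiv.Perm Q} (hd : d ∈ Dis op) (e : Q) :
    hQ.leftPerm e * d * (hQ.leftPerm e)⁻¹ ∈ Dis op := by
  have h : hQ.leftPerm e * d * (hQ.leftPerm e)⁻¹ = d * ⁅d⁻¹, hQ.leftPerm e⁆ := by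
    rw [commutatorElement_def]; group
  rw [h]
  exact mul_mem hd (hQ.commutatorElement_leftPerm_mem_dis (dis_le_lMlt op (inv_mem hd)) e)

theorem exists_dis_apply_eq_of_mem_lMlt {f : Equiv.Perm Q} (hf : f ∈ LMlt op) (p : Q) :
    ∃ d ∈ Dis op, f p = d p := by
  induction hf using Subgroup.closure_induction generalizing p with
  | mem f hf =>
    rw [hQ.translations_eq_range] at hf
    obtain ⟨a, rfl⟩ := hf
    refine ⟨_, hQ.leftPerm_mul_inv_mem_dis a p, ?_⟩
    rw [Equiv.Perm.mul_apply, leftPerm_inv_apply_self]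
  | one => exact ⟨1, one_mem _, rfl⟩
  | mul f g _ _ hf hg =>
    obtain ⟨dg, hdg, hg⟩ := hg p
    obtain ⟨df, hdf, hf⟩ := hf (g p)
    exact ⟨df * dg, mul_mem hdf hdg, by rw [Equiv.Perm.mul_apply, hf, hg]; rfl⟩
  | inv f _ hf =>
    obtain ⟨d, hd, h⟩ := hf (f⁻¹ p)
    simp only [← Equiv.Perm.mul_apply, mul_inv_cancel, Equiv.Perm.one_apply] at h
    exact ⟨d⁻¹, inv_mem hd, Equiv.Perm.eq_inv_iff_eq.2 h.symm⟩

theorem qOrbit_eq_disOrbit (e : Q) : qOrbit op e = disOrbit op e := by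
  ext x
  constructor
  · rintro ⟨f, hf, rfl⟩
    obtain ⟨d, hd, h⟩ := hQ.exists_dis_apply_eq_of_mem_lMlt hf e
    exact ⟨d, hd, h.symm⟩
  · rintro ⟨d, hd, rfl⟩
    exact ⟨d, dis_le_lMlt op hd, rfl⟩

section Medial

variable (hM : IsMedial op)
include hM

theorem leftPerm_mul_inv_mul_comm (x y u : Q) :
    hQ.leftPerm y * (hQ.leftPerm x)⁻¹ * hQ.leftPerm u =
      hQ.leftPerm u * (hQ.leftPerm x)⁻¹ * hQ.leftPerm y := by
  have hmed : hQ.leftPerm (op x y) * hQ.leftPerm u = hQ.leftPerm (op x u) * hQ.leftPerm y :=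
    Equiv.ext fun v => hM x y u v
  rw [← leftPerm_apply hQ x y, ← leftPerm_apply hQ x u,
    hQ.leftPerm_apply_of_mem_lMlt (hQ.leftPerm_mem_lMlt x),
    hQ.leftPerm_apply_of_mem_lMlt (hQ.leftPerm_mem_lMlt x)] at hmed
  simpa only [mul_assoc, mul_right_inj] using hmed

theorem commute_leftPerm_mul_inv (a b c d : Q) :
    Commute (hQ.leftPerm a * (hQ.leftPerm b)⁻¹) (hQ.leftPerm c * (hQ.leftPerm d)⁻¹) := by
  have same_base (u : Q) :
      Commute (hQ.leftPerm a * (hQ.leftPerm b)⁻¹) (hQ.leftPerm u * (hQ.leftPerm b)⁻¹) :=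
    calc hQ.leftPerm a * (hQ.leftPerm b)⁻¹ * (hQ.leftPerm u * (hQ.leftPerm b)⁻¹)
        = hQ.leftPerm a * (hQ.leftPerm b)⁻¹ * hQ.leftPerm u * (hQ.leftPerm b)⁻¹ := by group
      _ = hQ.leftPerm u * (hQ.leftPerm b)⁻¹ * hQ.leftPerm a * (hQ.leftPerm b)⁻¹ := by
        rw [hQ.leftPerm_mul_inv_mul_comm hM]
      _ = hQ.leftPerm u * (hQ.leftPerm b)⁻¹ * (hQ.leftPerm a * (hQ.leftPerm b)⁻¹) := by group
  have h : hQ.leftPerm c * (hQ.leftPerm d)⁻¹ =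
      hQ.leftPerm c * (hQ.leftPerm b)⁻¹ * (hQ.leftPerm d * (hQ.leftPerm b)⁻¹)⁻¹ := by group
  rw [h]
  exact (same_base c).mul_right (same_base d).inv_right

theorem dis_commute {d₁ d₂ : Equiv.Perm Q} (h₁ : d₁ ∈ Dis op) (h₂ : d₂ ∈ Dis op) :
    Commute d₁ d₂ := by
  have : IsMulCommutative (Dis op) := Subgroup.isMulCommutative_closure <| by
    rintro _ ⟨g, hg, h, hh, rfl⟩ _ ⟨g', hg', h', hh', rfl⟩
    rw [hQ.translations_eq_range] at hg hh hg' hh'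
    obtain ⟨a, rfl⟩ := hg
    obtain ⟨b, rfl⟩ := hh
    obtain ⟨c, rfl⟩ := hg'
    obtain ⟨d, rfl⟩ := hh'
    exact hQ.commute_leftPerm_mul_inv hM a b c d
  exact setLike_mul_comm h₁ h₂

theorem commutatorElement_leftPerm_mul {d₁ d₂ : Equiv.Perm Q} (h₁ : d₁ ∈ Dis op)
    (h₂ : d₂ ∈ Dis op) (e : Q) :
    ⁅d₁ * d₂, hQ.leftPerm e⁆ = ⁅d₁, hQ.leftPerm e⁆ * ⁅d₂, hQ.leftPerm e⁆ := by
  have hc₁ := hQ.leftPerm_conj_mem_dis (inv_mem h₁) e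
  have hc₂ := hQ.leftPerm_conj_mem_dis (inv_mem h₂) e
  have e₁ := (hQ.dis_commute hM hc₁ h₂).eq
  have e₂ := (hQ.dis_commute hM hc₁ hc₂).eq
  set L := hQ.leftPerm e
  calc ⁅d₁ * d₂, L⁆ = d₁ * d₂ * ((L * d₂⁻¹ * L⁻¹) * (L * d₁⁻¹ * L⁻¹)) := by
        rw [commutatorElement_def]; group
    _ = d₁ * ((L * d₁⁻¹ * L⁻¹) * d₂) * (L * d₂⁻¹ * L⁻¹) := by rw [e₁, ← e₂]; group
    _ = ⁅d₁, L⁆ * ⁅d₂, L⁆ := by rw [commutatorElement_def, commutatorElement_def]; group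

theorem commutatorElement_leftPerm_eq_of_mem_dis {d : Equiv.Perm Q} (hd : d ∈ Dis op)
    (e y : Q) : ⁅d, hQ.leftPerm y⁆ = ⁅d, hQ.leftPerm e⁆ := by
  have hc := hQ.leftPerm_conj_mem_dis (inv_mem hd) y
  have hcomm := (hQ.dis_commute hM (hQ.leftPerm_mul_inv_mem_dis e y) hc).eq
  calc ⁅d, hQ.leftPerm y⁆ = d * (hQ.leftPerm y * d⁻¹ * (hQ.leftPerm y)⁻¹) := by
        rw [commutatorElement_def]; group
    _ = d * ((hQ.leftPerm e * (hQ.leftPerm y)⁻¹) * (hQ.leftPerm y * d⁻¹ * (hQ.leftPerm y)⁻¹) *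
          (hQ.leftPerm e * (hQ.leftPerm y)⁻¹)⁻¹) := by rw [hcomm]; group
    _ = ⁅d, hQ.leftPerm e⁆ := by rw [commutatorElement_def]; group

noncomputable def commLeftHom (e : Q) : Monoid.End (Dis op) where
  toFun d := ⟨⁅(d : Equiv.Perm Q), hQ.leftPerm e⁆,
    hQ.commutatorElement_leftPerm_mem_dis (dis_le_lMlt op d.2) e⟩
  map_one' := Subtype.ext (commutatorElement_one_left _)
  map_mul' d₁ d₂ := Subtype.ext (hQ.commutatorElement_leftPerm_mul hM d₁.2 d₂.2 e)

theorem commLeftHom_eq (e y : Q) : hQ.commLeftHom hM y = hQ.commLeftHom hM e :=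
  MonoidHom.ext fun d => Subtype.ext (hQ.commutatorElement_leftPerm_eq_of_mem_dis hM d.2 e y)

theorem iterate_op_right_apply (y : Q) (k : ℕ) (d : Dis op) :
    (fun z => op z y)^[k] ((d : Equiv.Perm Q) y) =
      ((hQ.commLeftHom hM y)^[k] d : Equiv.Perm Q) y := by
  induction k generalizing d with
  | zero => rfl
  | succ k ih =>
    rw [Function.iterate_succ_apply, Function.iterate_succ_apply, ← ih]
    congr 1
    exact (hQ.commutatorElement_leftPerm_apply_self (dis_le_lMlt op d.2) y).symm

theorem isReductive_succ_iff (k : ℕ) :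
    IsReductive op (k + 1) ↔
      ∀ y : Q, ∀ d : Dis op, ((hQ.commLeftHom hM y)^[k] d : Equiv.Perm Q) y = y := by
  have base (x y : Q) : (fun z => op z y)^[k + 1] x =
      ((hQ.commLeftHom hM y)^[k] ⟨_, hQ.leftPerm_mul_inv_mem_dis x y⟩ : Equiv.Perm Q) y := by
    rw [← iterate_op_right_apply, Function.iterate_succ_apply, Subgroup.coe_mk,
      Equiv.Perm.mul_apply, leftPerm_inv_apply_self, leftPerm_apply]
  refine ⟨fun h y => ?_, fun h x y => (base x y).trans (h y _)⟩
  set K := (MulAction.stabilizer (Equiv.Perm Q) y).comap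
    ((Dis op).subtype.comp (hQ.commLeftHom hM y ^ k))
  have hK (d : Dis op) : d ∈ K ↔ ((hQ.commLeftHom hM y)^[k] d : Equiv.Perm Q) y = y :=
    Iff.rfl
  have hbase (a : Q) : (⟨_, hQ.leftPerm_mul_inv_mem_dis a y⟩ : Dis op) ∈ K :=
    (hK _).2 ((base a y).symm.trans (h a y))
  -- `K` is a subgroup, so it suffices to check the generators
  -- `L_a L_b⁻¹ = (L_a L_y⁻¹) (L_b L_y⁻¹)⁻¹` of `Dis(Q)`.
  suffices htop : (⊤ : Subgroup (Dis op)) ≤ K from fun d => (hK d).1 (htop trivial)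
  refine (Subgroup.closure_closure_coe_preimage).ge.trans ((Subgroup.closure_le _).2 ?_)
  rintro ⟨_, hd⟩ ⟨g, hg, g', hg', rfl⟩
  rw [hQ.translations_eq_range] at hg hg'
  obtain ⟨a, rfl⟩ := hg
  obtain ⟨b, rfl⟩ := hg'
  have hab : (⟨_, hd⟩ : Dis op) = ⟨_, hQ.leftPerm_mul_inv_mem_dis a y⟩ *
      (⟨_, hQ.leftPerm_mul_inv_mem_dis b y⟩ : Dis op)⁻¹ :=
    Subtype.ext (by simp only [Subgroup.coe_mul, Subgroup.coe_inv]; group)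
  change (⟨_, hd⟩ : Dis op) ∈ K
  rw [hab]
  exact mul_mem (hbase a) (inv_mem (hbase b))

theorem isReductiveOn_qOrbit_iff (e : Q) (k : ℕ) :
    IsReductiveOn op k (qOrbit op e) ↔
      ∀ y ∈ qOrbit op e, ∀ d : Dis op, ((hQ.commLeftHom hM y)^[k] d : Equiv.Perm Q) y = y := by
  simp only [IsReductiveOn, hQ.qOrbit_eq_disOrbit]
  constructor
  · rintro h _ ⟨d₀, hd₀, rfl⟩ d
    rw [← iterate_op_right_apply]
    exact h _ ⟨d * d₀, mul_mem d.2 hd₀, rfl⟩ _ ⟨d₀, hd₀, rfl⟩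
  · rintro h _ ⟨d₁, hd₁, rfl⟩ _ ⟨d₀, hd₀, rfl⟩
    have hd₁₀ : (d₁ * d₀⁻¹) (d₀ e) = d₁ e := by simp [Equiv.Perm.mul_apply]
    rw [← hd₁₀, ← Subgroup.coe_mk (Dis op) _ (mul_mem hd₁ (inv_mem hd₀)), iterate_op_right_apply]
    exact h _ ⟨d₀, hd₀, rfl⟩ _

theorem isReductive_succ_iff_forall_isReductiveOn_qOrbit (k : ℕ) :
    IsReductive op (k + 1) ↔ ∀ e : Q, IsReductiveOn op k (qOrbit op e) := by
  simp only [hQ.isReductive_succ_iff hM, hQ.isReductiveOn_qOrbit_iff hM]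
  exact ⟨fun h _ y _ => h y, fun h y => h y y (mem_qOrbit_self op y)⟩

theorem isReductive_add_two_of_isReductiveOn_qOrbit {e : Q} {m : ℕ}
    (h : IsReductiveOn op m (qOrbit op e)) : IsReductive op (m + 2) := by
  have hfix := (hQ.isReductiveOn_qOrbit_iff hM e m).1 h e (mem_qOrbit_self op e)
  have hkill (d : Dis op) : (hQ.commLeftHom hM e)^[m + 1] d = 1 := by
    rw [Function.iterate_succ_apply']
    exact Subtype.ext (hQ.commutatorElement_leftPerm_eq_one (dis_le_lMlt op (Subtype.prop _))
      (hfix d))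
  refine (hQ.isReductive_succ_iff hM (m + 1)).2 fun y d => ?_
  rw [hQ.commLeftHom_eq hM e y, hkill]
  rfl

end Medial

end IsQuandle

/-- Theorem 6.6: for a medial quandle `Q`, the following are equivalent:
(1) `Q` is reductive; (2) at least one orbit of `Q` is reductive; (3) all orbits of
`Q` are reductive. Moreover, (a) `Q` is `m`-reductive iff all orbits are
`(m-1)`-reductive, and (b) if one orbit is `m`-reductive then `Q` is
`(m+3)`-reductive. -/
theorem reductivity_of_medial_quandles {Q : Type*} [Nonempty Q] (op : Q → Q → Q)
    (hQ : IsQuandle op) (hM : IsMedial op) :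
    ((∃ m : ℕ, ∀ x y : Q, (fun z => op z y)^[m] x = y) ↔
      (∃ e : Q, ∃ m : ℕ, ∀ x ∈ qOrbit op e, ∀ y ∈ qOrbit op e,
        (fun z => op z y)^[m] x = y)) ∧
    ((∃ m : ℕ, ∀ x y : Q, (fun z => op z y)^[m] x = y) ↔
      (∀ e : Q, ∃ m : ℕ, ∀ x ∈ qOrbit op e, ∀ y ∈ qOrbit op e,
        (fun z => op z y)^[m] x = y)) ∧
    (∀ m : ℕ, 1 ≤ m →
      ((∀ x y : Q, (fun z => op z y)^[m] x = y) ↔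
        ∀ e : Q, ∀ x ∈ qOrbit op e, ∀ y ∈ qOrbit op e,
          (fun z => op z y)^[m - 1] x = y)) ∧
    (∀ m : ℕ,
      (∃ e : Q, ∀ x ∈ qOrbit op e, ∀ y ∈ qOrbit op e, (fun z => op z y)^[m] x = y) →
      ∀ x y : Q, (fun z => op z y)^[m + 3] x = y) := by
  have part_a (m : ℕ) (hm : 1 ≤ m) :
      IsReductive op m ↔ ∀ e : Q, IsReductiveOn op (m - 1) (qOrbit op e) := by
    obtain ⟨k, rfl⟩ : ∃ k, m = k + 1 := ⟨m - 1, by omega⟩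
    exact hQ.isReductive_succ_iff_forall_isReductiveOn_qOrbit hM k
  have part_b (m : ℕ) :
      (∃ e : Q, IsReductiveOn op m (qOrbit op e)) → IsReductive op (m + 3) :=
    fun ⟨_, he⟩ x y => hQ.isReductive_add_two_of_isReductiveOn_qOrbit hM he (op x y) y
  obtain ⟨e₀⟩ := ‹Nonempty Q›
  refine ⟨⟨fun ⟨m, h⟩ => ⟨e₀, m, fun x _ y _ => h x y⟩,
      fun ⟨e, m, h⟩ => ⟨m + 3, part_b m ⟨e, h⟩⟩⟩,
    ⟨fun ⟨m, h⟩ e => ⟨m, fun x _ y _ => h x y⟩, fun h => ?_⟩, part_a, part_b⟩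
  obtain ⟨m, hm⟩ := h e₀
  exact ⟨m + 3, part_b m ⟨e₀, hm⟩⟩
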